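/- Let ψ∈𝔐_∞^+ and let n∈ℕ be such that μ(ψ;n+1)>2. Then ∑_{k=1}^∞ψ(n+k) ≤ ψ(n+1)·(1 + 2(η(ψ;n+1)−(n+1))/(1 − 2/μ(ψ;n+1))). -/

import Mathlib

/-!
With `m = n + 1`, convexity and `ψ → 0` make `ψ` antitone, so the sum is at most
`ψ m + ∫_m^∞ ψ`. Cut `[m, ∞)` along the orbit `m, η m, η² m, …`, which is unbounded since `ψ`
halves along it. On the `j`-th block `ψ ≤ ψ m / 2 ^ j`, and monotonicity of `μ` bounds the block
length by `(η m - m) (η m / m) ^ j`; hence the integral is dominated by a geometric series of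
ratio `η m / (2 m) = (1 + 1 / μ(m)) / 2 < 1`.
-/

open Real MeasureTheory Filter

noncomputable section

/-- `ω` is a modulus of continuity: continuous, nondecreasing, subadditive on `[0,∞)`,
nonnegative, and `ω 0 = 0`. -/
def IsModulus (ω : ℝ → ℝ) : Prop :=
  ContinuousOn ω (Set.Ici 0) ∧ MonotoneOn ω (Set.Ici 0) ∧
  (∀ s t : ℝ, 0 ≤ s → 0 ≤ t → ω (s + t) ≤ ω s + ω t) ∧ ω 0 = 0 ∧
  ∀ t : ℝ, 0 ≤ t → 0 ≤ ω t

/-- `ψ` belongs to `𝔐_∞^+`, where `η t = ψ⁻¹(ψ t / 2)` (i.e. `η t ≥ t` and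
`ψ (η t) = ψ t / 2`) and `μ t = t / (η t − t)` is nondecreasing and tends to `∞`. -/
def IsMInfPlus (ψ η : ℝ → ℝ) : Prop :=
  (∀ t ≥ (1:ℝ), 0 < ψ t) ∧ ContinuousOn ψ (Set.Ici 1) ∧
  ConvexOn ℝ (Set.Ici 1) ψ ∧ Tendsto ψ atTop (nhds 0) ∧
  (∀ t ≥ (1:ℝ), t < η t ∧ ψ (η t) = ψ t / 2) ∧
  MonotoneOn (fun t => t / (η t - t)) (Set.Ici 1) ∧
  Tendsto (fun t => t / (η t - t)) atTop atTop

open Set Finset intervalIntegral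

theorem ConvexOn.antitoneOn_of_tendsto {f : ℝ → ℝ} {a l : ℝ} (hf : ConvexOn ℝ (Ici a) f)
    (hlim : Tendsto f atTop (nhds l)) (hl : ∀ t ∈ Ici a, l < f t) : AntitoneOn f (Ici a) := by
  intro s hs t ht hst
  by_contra! hlt
  have hst' : s < t := hst.lt_of_ne (by rintro rfl; exact lt_irrefl _ hlt)
  obtain ⟨u, hut, htu⟩ :=
    ((hlim.eventually_lt_const (hl t ht)).and (eventually_gt_atTop t)).exists
  have := hf.slope_mono_adjacent hs (mem_Ici.2 (ht.out.trans htu.le)) hst' htu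
  have : 0 < (f t - f s) / (t - s) := div_pos (by linarith) (by linarith)
  have : (f u - f t) / (u - t) < 0 := div_neg_of_neg_of_pos (by linarith) (by linarith)
  linarith

theorem AntitoneOn.tsum_le_add_of_integral_le {f : ℝ → ℝ} {m C : ℝ} (hf : AntitoneOn f (Ici m))
    (hnn : ∀ x ∈ Ici m, 0 ≤ f x) (hC : ∀ b ≥ m, ∫ x in m..b, f x ≤ C) :
    ∑' k : ℕ, f (m + k) ≤ f m + C := by
  refine Real.tsum_le_of_sum_range_le (fun k ↦ hnn _ (by simp)) fun N ↦ ?_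
  cases N with
  | zero => simpa using add_nonneg (hnn m self_mem_Ici) ((hC m le_rfl).trans' (by simp))
  | succ N =>
    rw [Finset.sum_range_succ', Nat.cast_zero, add_zero, add_comm]
    gcongr
    calc ∑ i ∈ range N, f (m + ↑(i + 1))
        ≤ ∫ x in m..m + N, f x := (hf.mono Icc_subset_Ici_self).sum_le_integral
      _ ≤ C := hC _ (by simp)

theorem AntitoneOn.intervalIntegrable_of_Ici {f : ℝ → ℝ} {a u v : ℝ} (hf : AntitoneOn f (Ici a))
    (hu : a ≤ u) (hv : a ≤ v) : IntervalIntegrable f volume u v :=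
  (hf.mono fun _ hx ↦ (le_min hu hv).trans hx.1).intervalIntegrable

section HalvingOrbit

variable {ψ η : ℝ → ℝ} {a m : ℝ}

theorem le_iterate_of_lt (hη : ∀ t ≥ a, t < η t) (hm : a ≤ m) (j : ℕ) : m ≤ η^[j] m := by
  induction j with
  | zero => rfl
  | succ j ih =>
    rw [Function.iterate_succ_apply']
    exact ih.trans (hη _ (hm.trans ih)).le

theorem iterate_lt_iterate_succ (hη : ∀ t ≥ a, t < η t) (hm : a ≤ m) (j : ℕ) :
    η^[j] m < η^[j + 1] m := by
  rw [Function.iterate_succ_apply']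
  exact hη _ (hm.trans (le_iterate_of_lt hη hm j))

theorem apply_iterate_of_halving (hη : ∀ t ≥ a, t < η t) (hψη : ∀ t ≥ a, ψ (η t) = ψ t / 2)
    (hm : a ≤ m) (j : ℕ) : ψ (η^[j] m) = ψ m / 2 ^ j := by
  induction j with
  | zero => simp
  | succ j ih =>
    rw [Function.iterate_succ_apply', hψη _ (hm.trans (le_iterate_of_lt hη hm j)), ih, pow_succ,
      div_div]

theorem exists_le_iterate_of_halving (hψ : AntitoneOn ψ (Ici a)) (hpos : ∀ t ≥ a, 0 < ψ t)
    (hη : ∀ t ≥ a, t < η t) (hψη : ∀ t ≥ a, ψ (η t) = ψ t / 2) (hm : a ≤ m) (B : ℝ) :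
    ∃ j, B ≤ η^[j] m := by
  by_contra! hB
  have hB' : a ≤ B := hm.trans ((le_iterate_of_lt hη hm 0).trans (hB 0).le)
  obtain ⟨j, hj⟩ := pow_unbounded_of_one_lt (ψ m / ψ B) one_lt_two
  have hle : ψ B ≤ ψ m / 2 ^ j := apply_iterate_of_halving hη hψη hm j ▸
    hψ (hm.trans (le_iterate_of_lt hη hm j)) hB' (hB j).le
  rw [div_lt_iff₀ (hpos B hB')] at hj
  rw [le_div_iff₀ (by positivity)] at hle
  linarith

theorem iterate_succ_le_mul (hη : ∀ t ≥ a, t < η t)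
    (hμ : MonotoneOn (fun t ↦ t / (η t - t)) (Ici a)) (ha : 0 < a) (hm : a ≤ m) (j : ℕ) :
    η^[j + 1] m ≤ η^[j] m * (η m / m) := by
  set x := η^[j] m
  have hmx : m ≤ x := le_iterate_of_lt hη hm j
  have hm0 : 0 < m := ha.trans_le hm
  have hd : 0 < η m - m := sub_pos.2 (hη m hm)
  have hg : 0 < η x - x := sub_pos.2 (hη x (hm.trans hmx))
  have hμx : m / (η m - m) ≤ x / (η x - x) := hμ hm (hm.trans hmx) hmx
  rw [div_le_div_iff₀ hd hg] at hμx
  rw [Function.iterate_succ_apply', mul_div_assoc', le_div_iff₀ hm0]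
  nlinarith

theorem iterate_le_mul_pow (hη : ∀ t ≥ a, t < η t)
    (hμ : MonotoneOn (fun t ↦ t / (η t - t)) (Ici a)) (ha : 0 < a) (hm : a ≤ m) (j : ℕ) :
    η^[j] m ≤ m * (η m / m) ^ j := by
  induction j with
  | zero => simp
  | succ j ih =>
    calc η^[j + 1] m ≤ η^[j] m * (η m / m) := iterate_succ_le_mul hη hμ ha hm j
      _ ≤ m * (η m / m) ^ j * (η m / m) := by
        gcongr
        exact div_nonneg ((ha.trans_le hm).le.trans (hη m hm).le) (ha.trans_le hm).le
      _ = m * (η m / m) ^ (j + 1) := by ring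

theorem iterate_succ_sub_iterate_le (hη : ∀ t ≥ a, t < η t)
    (hμ : MonotoneOn (fun t ↦ t / (η t - t)) (Ici a)) (ha : 0 < a) (hm : a ≤ m) (j : ℕ) :
    η^[j + 1] m - η^[j] m ≤ (η m - m) * (η m / m) ^ j := by
  have hm0 : 0 < m := ha.trans_le hm
  have hr : 0 ≤ η m / m - 1 := by
    rw [sub_nonneg, one_le_div hm0]; exact (hη m hm).le
  calc η^[j + 1] m - η^[j] m ≤ η^[j] m * (η m / m - 1) := by
        linarith [iterate_succ_le_mul hη hμ ha hm j]
    _ ≤ m * (η m / m) ^ j * (η m / m - 1) := by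
        gcongr; exact iterate_le_mul_pow hη hμ ha hm j
    _ = (η m - m) * (η m / m) ^ j := by field_simp

end HalvingOrbit

section HalvingIntegral

variable {ψ η : ℝ → ℝ} {a m : ℝ}

theorem integral_iterate_le (hψ : AntitoneOn ψ (Ici a)) (hpos : ∀ t ≥ a, 0 < ψ t)
    (hη : ∀ t ≥ a, t < η t) (hψη : ∀ t ≥ a, ψ (η t) = ψ t / 2)
    (hμ : MonotoneOn (fun t ↦ t / (η t - t)) (Ici a)) (ha : 0 < a) (hm : a ≤ m) (j : ℕ) :
    ∫ x in η^[j] m..η^[j + 1] m, ψ x ≤ ψ m * (η m - m) * (η m / m / 2) ^ j := by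
  have hx : a ≤ η^[j] m := hm.trans (le_iterate_of_lt hη hm j)
  have hlt := iterate_lt_iterate_succ hη hm j
  calc ∫ x in η^[j] m..η^[j + 1] m, ψ x ≤ ∫ _ in η^[j] m..η^[j + 1] m, ψ (η^[j] m) :=
        integral_mono_on hlt.le (hψ.intervalIntegrable_of_Ici hx (hx.trans hlt.le))
          intervalIntegrable_const fun x hx' ↦ hψ hx (hx.trans hx'.1) hx'.1
    _ = ψ m / 2 ^ j * (η^[j + 1] m - η^[j] m) := by
        rw [intervalIntegral.integral_const, smul_eq_mul, mul_comm,
          apply_iterate_of_halving hη hψη hm]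
    _ ≤ ψ m / 2 ^ j * ((η m - m) * (η m / m) ^ j) := by
        have := hpos m hm
        gcongr
        exact iterate_succ_sub_iterate_le hη hμ ha hm j
    _ = ψ m * (η m - m) * (η m / m / 2) ^ j := by rw [div_pow _ (2 : ℝ)]; ring

theorem integral_le_of_halving (hψ : AntitoneOn ψ (Ici a)) (hpos : ∀ t ≥ a, 0 < ψ t)
    (hη : ∀ t ≥ a, t < η t) (hψη : ∀ t ≥ a, ψ (η t) = ψ t / 2)
    (hμ : MonotoneOn (fun t ↦ t / (η t - t)) (Ici a)) (ha : 0 < a) (hm : a ≤ m)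
    (h2m : η m < 2 * m) {b : ℝ} (hb : m ≤ b) :
    ∫ x in m..b, ψ x ≤ 2 * ψ m * (η m - m) / (2 - η m / m) := by
  have hm0 : 0 < m := ha.trans_le hm
  have hq0 : 0 ≤ η m / m / 2 := by
    have := (hη m hm).le
    exact div_nonneg (div_nonneg (by linarith) hm0.le) zero_le_two
  have hq1 : η m / m / 2 < 1 := by
    rw [div_lt_one two_pos, div_lt_iff₀ hm0]; linarith
  have hM : ∀ j, a ≤ η^[j] m := fun j ↦ hm.trans (le_iterate_of_lt hη hm j)
  obtain ⟨J, hJ⟩ := exists_le_iterate_of_halving hψ hpos hη hψη hm b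
  calc ∫ x in m..b, ψ x ≤ ∫ x in η^[0] m..η^[J] m, ψ x := by
        refine integral_mono_interval le_rfl hb hJ ?_ (hψ.intervalIntegrable_of_Ici hm (hM J))
        exact (ae_restrict_mem measurableSet_Ioc).mono fun x hx ↦ (hpos x (hm.trans hx.1.le)).le
    _ = ∑ j ∈ range J, ∫ x in η^[j] m..η^[j + 1] m, ψ x :=
        (sum_integral_adjacent_intervals fun j _ ↦
          hψ.intervalIntegrable_of_Ici (hM j) (hM (j + 1))).symm
    _ ≤ ∑ j ∈ range J, ψ m * (η m - m) * (η m / m / 2) ^ j :=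
        sum_le_sum fun j _ ↦ integral_iterate_le hψ hpos hη hψη hμ ha hm j
    _ = ψ m * (η m - m) * ∑ j ∈ Ico 0 J, (η m / m / 2) ^ j := by rw [← mul_sum, range_eq_Ico]
    _ ≤ ψ m * (η m - m) * ((η m / m / 2) ^ 0 / (1 - η m / m / 2)) := by
        gcongr
        · exact mul_nonneg (hpos m hm).le (sub_nonneg.2 (hη m hm).le)
        · exact geom_sum_Ico_le_of_lt_one hq0 hq1
    _ = 2 * ψ m * (η m - m) / (2 - η m / m) := by
        have : 2 - η m / m ≠ 0 := by linarith
        field_simp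

end HalvingIntegral

/-- Estimate (108): if `ψ ∈ 𝔐_∞^+` and `μ(n+1) > 2`, then
`∑_{k=1}^∞ ψ(n+k) ≤ ψ(n+1)(1 + 2(η(n+1)−(n+1))/(1 − 2/μ(n+1)))`. -/
theorem statement16 (ψ η : ℝ → ℝ) (hψ : IsMInfPlus ψ η) (n : ℕ)
    (hμ : 2 < ((n : ℝ) + 1) / (η ((n : ℝ) + 1) - ((n : ℝ) + 1))) :
    (∑' k : ℕ, ψ ((n : ℝ) + k + 1)) ≤
      ψ ((n : ℝ) + 1) *
        (1 + 2 * (η ((n : ℝ) + 1) - ((n : ℝ) + 1)) /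
          (1 - 2 / (((n : ℝ) + 1) / (η ((n : ℝ) + 1) - ((n : ℝ) + 1))))) := by
  obtain ⟨hpos, -, hconv, hlim, hη, hμmono, -⟩ := hψ
  have hanti : AntitoneOn ψ (Ici 1) := hconv.antitoneOn_of_tendsto hlim hpos
  set m : ℝ := (n : ℝ) + 1
  have hm : 1 ≤ m := by simp [m]
  have hd : 0 < η m - m := sub_pos.2 (hη m hm).1
  have hden_pos : 0 < 1 - 2 / (m / (η m - m)) := by
    rw [sub_pos, div_lt_one (by linarith)]; exact hμ
  have h2m : η m < 2 * m := by
    rw [lt_div_iff₀ hd] at hμ; linarith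
  have hsum := (hanti.mono (Ici_subset_Ici.2 hm)).tsum_le_add_of_integral_le
    (fun x hx ↦ (hpos x (hm.trans hx)).le) fun b hb ↦
      integral_le_of_halving hanti hpos (fun t ht ↦ (hη t ht).1) (fun t ht ↦ (hη t ht).2)
        hμmono one_pos hm h2m hb
  have hshift : ∀ k : ℕ, (n : ℝ) + k + 1 = m + k := fun k ↦ by ring
  simp only [hshift]
  have hden : 1 - 2 / (m / (η m - m)) ≤ 2 - η m / m := by
    have hgap : 2 - η m / m - (1 - 2 / (m / (η m - m))) = (η m - m) / m := by
      field_simp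
      ring
    linarith [div_pos hd (by linarith : (0 : ℝ) < m)]
  calc ∑' k : ℕ, ψ (m + k) ≤ ψ m + 2 * ψ m * (η m - m) / (2 - η m / m) := hsum
    _ ≤ ψ m + 2 * ψ m * (η m - m) / (1 - 2 / (m / (η m - m))) := by
        gcongr
        have := hpos m hm
        positivity
    _ = ψ m * (1 + 2 * (η m - m) / (1 - 2 / (m / (η m - m)))) := by ring
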